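/- Let m ∈ ℕ with m ≥ 1, let a_j = e^{iπ(j-1)/(m+1)} for j = 1,…,m+1, let c = i^{m-1}, and let A₀,…,A_{2m+2} denote the coefficients of P(z) = ∏_{j=1}^{m+1}(z - a_j)(z + 1/conj(a_j)). Then |c| = 1 and the list (c, a₁, …, a_{m+1}) is a solution of the period problem with complexity m: conj(c·A_m) = -c·A_{m+2}, Im(c·A_{m+1}) = 0, and -conj(c)/c = ∏_{j=1}^{m+1} a_j/conj(a_j). (In fact A_m = A_{m+1} = A_{m+2} = 0.) -/

import Mathlib

/-!
Since `|a_j| = 1`, each factor of `P` is `X² - a_j²`, and `a_j² = ζ^j` runs over the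
`(m+1)`-th roots of unity, so `P = X^(2m+2) - 1` and all middle coefficients vanish.
Likewise `∏ a_j / conj a_j = ∏ ζ^j = (-1)^m`, which is `-conj c / c` for `c = i^(m-1)`.
-/

open Polynomial Finset

theorem Polynomial.prod_range_X_pow_sub_C_pow {R : Type*} [CommRing R] [IsDomain R] {ζ : R}
    {n : ℕ} (hζ : IsPrimitiveRoot ζ n) (hn : 0 < n) (k : ℕ) :
    ∏ j ∈ range n, (X ^ k - C (ζ ^ j)) = X ^ (k * n) - 1 := by
  have h := congrArg (·.comp (X ^ k : R[X])) (X_pow_sub_C_eq_prod hζ hn (one_pow n))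
  simp only [prod_comp, sub_comp, pow_comp, X_comp, C_comp, one_comp, mul_one, map_one] at h
  rw [← h, ← pow_mul, mul_comm]

theorem IsPrimitiveRoot.prod_range_pow {R : Type*} [CommRing R] [IsDomain R] {ζ : R} {n : ℕ}
    (hζ : IsPrimitiveRoot ζ n) (hn : 0 < n) :
    ∏ j ∈ range n, ζ ^ j = (-1) ^ (n + 1) := by
  have h := congrArg (eval 0) (X_pow_sub_C_eq_prod hζ hn (one_pow n))
  simp only [eval_sub, eval_pow, eval_X, eval_C, eval_prod, zero_sub, mul_one, prod_neg,
    card_range, zero_pow hn.ne'] at h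
  calc ∏ j ∈ range n, ζ ^ j = (-1) ^ n * ((-1) ^ n * ∏ j ∈ range n, ζ ^ j) := by
        rw [← mul_assoc, ← pow_add, Even.neg_one_pow ⟨n, rfl⟩, one_mul]
    _ = (-1) ^ (n + 1) := by rw [← h, pow_succ]

theorem Complex.neg_conj_div_self_I_pow (k : ℕ) :
    -(starRingEnd ℂ) (I ^ k) / I ^ k = (-1) ^ (k + 1) := by
  rw [map_pow, conj_I, neg_pow, neg_div, mul_div_assoc, div_self (pow_ne_zero _ I_ne_zero)]
  ring

theorem most_symmetric_solution_period_problem (m : ℕ) (hm : 1 ≤ m)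
    (a : ℕ → ℂ)
    (ha : ∀ j, a j = Complex.exp (Real.pi * Complex.I * j / (m + 1)))
    (c : ℂ) (hc : c = Complex.I ^ (m - 1))
    (P : Polynomial ℂ)
    (hP : P = ∏ j ∈ Finset.range (m + 1),
      ((X - C (a j)) * (X + C (1 / (starRingEnd ℂ) (a j))))) :
    ‖c‖ = 1 ∧
    (starRingEnd ℂ) (c * P.coeff m) = -(c * P.coeff (m + 2)) ∧
    (c * P.coeff (m + 1)).im = 0 ∧
    -((starRingEnd ℂ) c) / c =
      ∏ j ∈ Finset.range (m + 1), (a j / (starRingEnd ℂ) (a j)) ∧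
    P.coeff m = 0 ∧ P.coeff (m + 1) = 0 ∧ P.coeff (m + 2) = 0 := by
  set ζ := Complex.exp (2 * Real.pi * Complex.I / (m + 1))
  have hζ : IsPrimitiveRoot ζ (m + 1) := by
    simpa using Complex.isPrimitiveRoot_exp (m + 1) m.succ_ne_zero
  have hconj (j : ℕ) : (starRingEnd ℂ) (a j) = (a j)⁻¹ := by
    refine (Complex.inv_eq_conj ?_).symm
    rw [ha, show Real.pi * Complex.I * j / (m + 1) = ↑(Real.pi * j / (m + 1)) * Complex.I by
      push_cast; ring]
    exact Complex.norm_exp_ofReal_mul_I _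
  have hsq (j : ℕ) : a j ^ 2 = ζ ^ j := by
    rw [ha, ← Complex.exp_nat_mul, ← Complex.exp_nat_mul]
    congr 1
    ring
  have hPeq : P = X ^ (2 * (m + 1)) - 1 := by
    rw [hP, ← prod_range_X_pow_sub_C_pow hζ m.succ_pos]
    refine prod_congr rfl fun j _ => ?_
    rw [hconj, one_div, inv_inv, ← hsq, C_pow]
    ring
  have hcoeff {k : ℕ} (hk : k ≠ 0) (hk' : k ≠ 2 * (m + 1)) : P.coeff k = 0 := by
    simp [hPeq, coeff_X_pow, coeff_one, hk, hk']
  obtain ⟨hcm, hcm1, hcm2⟩ : P.coeff m = 0 ∧ P.coeff (m + 1) = 0 ∧ P.coeff (m + 2) = 0 :=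
    ⟨hcoeff (by omega) (by omega), hcoeff (by omega) (by omega), hcoeff (by omega) (by omega)⟩
  have hprod : ∏ j ∈ range (m + 1), a j / (starRingEnd ℂ) (a j) = (-1) ^ m := by
    simp_rw [hconj, div_inv_eq_mul, ← sq, hsq]
    rw [hζ.prod_range_pow m.succ_pos, pow_succ, pow_succ]
    ring
  refine ⟨by simp [hc], by simp [hcm, hcm2], by simp [hcm1], ?_, hcm, hcm1, hcm2⟩
  rw [hprod, hc, Complex.neg_conj_div_self_I_pow, Nat.sub_add_cancel hm]
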